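/- Let n ≥ 1, m, k ∈ ℤ, ε = ±1, and let λ ∈ ℝ^n have pairwise distinct nonzero entries. Then for every μ ∈ ℝ^n and every r ∈ {1,…,n}, the Stäckel Hamiltonians satisfy the separation relations ∑_{i=1}^n H_i^{n,m,k}(λ,μ) · λ_r^{n−i} = λ_r^m μ_r² + (ε/4) λ_r^k. -/

import Mathlib

noncomputable section

/-- Viète polynomial `q_i(λ) = (-1)^i e_i(λ)`; by convention `q_0 = 1` and `q_i = 0` for `i > n`. -/
def viete {n : ℕ} (i : ℕ) (lam : Fin n → ℝ) : ℝ :=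
  (-1 : ℝ) ^ i * ∑ s ∈ Finset.powersetCard i (Finset.univ : Finset (Fin n)), ∏ j ∈ s, lam j

/-- The partial derivative `∂q_i/∂λ_j` of the `i`-th Viète polynomial. -/
def vieteD {n : ℕ} (i : ℕ) (lam : Fin n → ℝ) (j : Fin n) : ℝ :=
  fderiv ℝ (viete i) lam (Pi.single j 1)

/-- `Δ_j(λ) = ∏_{s ≠ j} (λ_j - λ_s)`. -/
def Delta {n : ℕ} (lam : Fin n → ℝ) (j : Fin n) : ℝ :=
  ∏ s ∈ Finset.univ.erase j, (lam j - lam s)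

/-- Benenti potentials `V_i^{(k)}` for `k ≥ 0`: `Vpos n q k i = V_i^{(k)}(q)` (`i` 1-based),
with `V_i^{(0)} = δ_{i n}` and `V_i^{(k+1)} = V_{i+1}^{(k)} - q_i V_1^{(k)}`, `V_{n+1}^{(k)} := 0`. -/
def Vpos (n : ℕ) (q : ℕ → ℝ) : ℕ → ℕ → ℝ
  | 0, i => if i = n then 1 else 0
  | k + 1, i => (if i = n then 0 else Vpos n q k (i + 1)) - q i * Vpos n q k 1

/-- Benenti potentials for negative superscripts: `Vneg n q j r = V_r^{(-j)}(q)`, via the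
backward recursion `V_r^{(k)} = V_{r-1}^{(k+1)} - (q_{r-1}/q_n) V_n^{(k+1)}`, with
`V_0 := 0` and `q_0 := 1`. -/
def Vneg (n : ℕ) (q : ℕ → ℝ) : ℕ → ℕ → ℝ
  | 0, r => if r = n then 1 else 0
  | j + 1, r =>
      (if r = 1 then 0 else Vneg n q j (r - 1)) -
        (if r = 1 then 1 else q (r - 1)) / q n * Vneg n q j n

/-- Benenti potential `V_i^{(k)}(q)` for `k : ℤ`, `i` 1-based. -/
def benenti (n : ℕ) (q : ℕ → ℝ) (k : ℤ) (i : ℕ) : ℝ :=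
  if 0 ≤ k then Vpos n q k.toNat i else Vneg n q (-k).toNat i

/-- Stäckel Hamiltonian of Benenti type
`H_i^{n,m,k}(λ,μ) = ∑_j (-∂q_i/∂λ_j)(λ) (λ_j^m/Δ_j(λ)) μ_j² + (ε/4) V_i^{(k)}(q(λ))`
(`i` 1-based). -/
def stackelH (n : ℕ) (m k : ℤ) (ε : ℝ) (i : ℕ) (lam mu : Fin n → ℝ) : ℝ :=
  (∑ j : Fin n, (-vieteD i lam j) * (lam j ^ m / Delta lam j) * mu j ^ 2) +
    ε / 4 * benenti n (fun a => viete a lam) k i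

/-!
Vieta's formula `∏ₛ (x - λₛ) = xⁿ + ∑ᵢ qᵢ(λ) xⁿ⁻ⁱ`, differentiated in `λⱼ`, gives
`∑ᵢ (-∂qᵢ/∂λⱼ) xⁿ⁻ⁱ = ∏_{s ≠ j} (x - λₛ)`; at `x = λᵣ` this vanishes unless `j = r`, where it is
`Δᵣ`, which yields the kinetic part. For the potentials, `Gₖ(x) = ∑ᵢ Vᵢ⁽ᵏ⁾ xⁿ⁻ⁱ` satisfies
`Gₖ₊₁ = x Gₖ - V₁⁽ᵏ⁾ P` and `x Gₖ₋₁ = Gₖ - (Vₙ⁽ᵏ⁾/qₙ) P` with `P(x) = ∏ₛ (x - λₛ)`, so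
`Gₖ(λᵣ) = λᵣᵏ` for every `k ∈ ℤ`.
-/

open Finset

def evalDesc (n : ℕ) (f : ℕ → ℝ) (x : ℝ) : ℝ :=
  ∑ i ∈ Icc 1 n, f i * x ^ (n - i)

lemma sum_Icc_one_eq_sum_range {M : Type*} [AddCommMonoid M] (g : ℕ → M) (n : ℕ) :
    ∑ i ∈ Icc 1 n, g i = ∑ j ∈ range n, g (j + 1) := by
  rw [range_eq_Ico, sum_Ico_add', ← Ico_add_one_right_eq_Icc]

lemma evalDesc_congr {n : ℕ} {f g : ℕ → ℝ} {x : ℝ} (h : ∀ i ∈ Icc 1 n, f i = g i) :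
    evalDesc n f x = evalDesc n g x :=
  sum_congr rfl fun i hi => by rw [h i hi]

lemma evalDesc_succ (n : ℕ) (f : ℕ → ℝ) (x : ℝ) :
    evalDesc (n + 1) f x = f 1 * x ^ n + evalDesc n (fun i => f (i + 1)) x := by
  simp only [evalDesc, sum_Icc_one_eq_sum_range, sum_range_succ', add_comm (f 1 * _)]
  simp

lemma evalDesc_succ_top (n : ℕ) (f : ℕ → ℝ) (x : ℝ) :
    evalDesc (n + 1) f x = x * evalDesc n f x + f (n + 1) := by
  rw [evalDesc, sum_Icc_succ_top (by omega), evalDesc, mul_sum, Nat.sub_self, pow_zero, mul_one]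
  congr 1
  refine sum_congr rfl fun i hi => ?_
  rw [Nat.sub_add_comm (mem_Icc.mp hi).2, pow_succ]
  ring

lemma evalDesc_succ_ite_one (n : ℕ) (f : ℕ → ℝ) (c x : ℝ) :
    evalDesc (n + 1) (fun i => if i = 1 then c else f (i - 1)) x = c * x ^ n + evalDesc n f x := by
  rw [evalDesc_succ, if_pos rfl]
  congr 1
  exact evalDesc_congr fun i hi => by
    rw [if_neg (by have := mem_Icc.1 hi; omega), Nat.add_sub_cancel]

lemma evalDesc_ite_eq_top (n : ℕ) (x : ℝ) :
    evalDesc (n + 1) (fun i => if i = n + 1 then 1 else 0) x = 1 := by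
  simp [evalDesc]

lemma evalDesc_add_mul (n : ℕ) (f g : ℕ → ℝ) (c x : ℝ) :
    evalDesc n (fun i => f i + c * g i) x = evalDesc n f x + c * evalDesc n g x := by
  simp only [evalDesc, add_mul, sum_add_distrib, mul_sum, mul_assoc]

lemma evalDesc_sub_mul (n : ℕ) (f g : ℕ → ℝ) (c x : ℝ) :
    evalDesc n (fun i => f i - g i * c) x = evalDesc n f x - evalDesc n g x * c := by
  simp only [evalDesc, sub_mul, sum_sub_distrib, sum_mul, mul_right_comm _ c]

lemma evalDesc_div_const (n : ℕ) (f : ℕ → ℝ) (a x : ℝ) :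
    evalDesc n (fun i => f i / a) x = evalDesc n f x / a := by
  simp only [evalDesc, div_mul_eq_mul_div, sum_div]

lemma prod_sub_eq_evalDesc_viete {n : ℕ} (lam : Fin n → ℝ) (x : ℝ) :
    ∏ s, (x - lam s) = x ^ n + evalDesc n (fun i => viete i lam) x := by
  have h := congrArg (Polynomial.eval x) (Multiset.prod_X_sub_X_eq_sum_esymm (univ.val.map lam))
  simp only [Multiset.map_map, Function.comp_def, prod_map_val, Polynomial.eval_prod,
    Polynomial.eval_sub, Polynomial.eval_X, Polynomial.eval_C, Polynomial.eval_finsetSum,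
    Polynomial.eval_mul, Polynomial.eval_pow, Polynomial.eval_neg, Polynomial.eval_one,
    Multiset.card_map, card_val, card_univ, Fintype.card_fin, esymm_map_val] at h
  rw [h, sum_range_succ', evalDesc, sum_Icc_one_eq_sum_range, add_comm]
  simp [viete, mul_assoc]

lemma viete_self_ne_zero {n : ℕ} {lam : Fin n → ℝ} (h0 : ∀ j, lam j ≠ 0) : viete n lam ≠ 0 := by
  have huniv : powersetCard n (univ : Finset (Fin n)) = {univ} := by
    simpa using powersetCard_self (univ : Finset (Fin n))
  simp [viete, huniv, prod_ne_zero_iff, h0]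

lemma differentiable_viete {n : ℕ} (i : ℕ) : Differentiable ℝ (viete (n := n) i) := by
  unfold viete
  fun_prop

lemma evalDesc_neg_vieteD {n : ℕ} (lam : Fin n → ℝ) (x : ℝ) (j : Fin n) :
    evalDesc n (fun i => -vieteD i lam j) x = ∏ s ∈ univ.erase j, (x - lam s) := by
  have hprod : HasFDerivAt (fun l : Fin n → ℝ => ∏ s, (x - l s))
      (∑ s, (∏ t ∈ univ.erase s, (x - lam t)) •
        -ContinuousLinearMap.proj (R := ℝ) (φ := fun _ : Fin n => ℝ) s) lam :=
    HasFDerivAt.finsetProd fun s _ => (hasFDerivAt_apply s lam).const_sub x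
  have hpoly : HasFDerivAt (fun l : Fin n → ℝ => x ^ n + evalDesc n (fun i => viete i l) x)
      (∑ i ∈ Icc 1 n, x ^ (n - i) • fderiv ℝ (viete i) lam) lam := by
    unfold evalDesc
    exact (HasFDerivAt.fun_sum fun i _ =>
      ((differentiable_viete i lam).hasFDerivAt).mul_const (x ^ (n - i))).const_add _
  simp only [← prod_sub_eq_evalDesc_viete] at hpoly
  have h := congrArg (· (Pi.single j 1)) (hprod.unique hpoly)
  simp only [smul_neg, sum_neg_distrib, neg_apply, _root_.sum_apply, smul_apply,
    ContinuousLinearMap.proj_apply, Pi.single_apply, smul_eq_mul, mul_ite, mul_one, mul_zero,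
    sum_ite_eq', mem_univ, ↓reduceIte] at h
  simp only [evalDesc, vieteD, mul_neg, sum_neg_distrib, mul_comm _ (x ^ _), ← h, neg_neg]

lemma Delta_ne_zero {n : ℕ} {lam : Fin n → ℝ} (hinj : Function.Injective lam) (r : Fin n) :
    Delta lam r ≠ 0 :=
  prod_ne_zero_iff.2 fun _ hs => sub_ne_zero.2 (hinj.ne (mem_erase.1 hs).1.symm)

lemma evalDesc_sum_neg_vieteD_mul {n : ℕ} (lam c : Fin n → ℝ) (r : Fin n) :
    evalDesc n (fun i => ∑ j, -vieteD i lam j * c j) (lam r) = c r * Delta lam r := by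
  calc evalDesc n (fun i => ∑ j, -vieteD i lam j * c j) (lam r)
      = ∑ j, c j * evalDesc n (fun i => -vieteD i lam j) (lam r) := by
        simp only [evalDesc, sum_mul, mul_sum]
        rw [sum_comm]
        exact sum_congr rfl fun j _ => sum_congr rfl fun i _ => by ring
    _ = ∑ j, c j * ∏ s ∈ univ.erase j, (lam r - lam s) := by simp only [evalDesc_neg_vieteD]
    _ = c r * Delta lam r := by
        refine sum_eq_single r (fun j _ hj => ?_) (by simp)
        rw [prod_eq_zero (mem_erase.2 ⟨Ne.symm hj, mem_univ r⟩) (sub_self _), mul_zero]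

lemma evalDesc_Vpos_succ (n : ℕ) (q : ℕ → ℝ) (k : ℕ) (x : ℝ) :
    evalDesc (n + 1) (Vpos (n + 1) q (k + 1)) x =
      x * evalDesc (n + 1) (Vpos (n + 1) q k) x -
        Vpos (n + 1) q k 1 * (x ^ (n + 1) + evalDesc (n + 1) q x) := by
  have hshift : evalDesc (n + 1) (fun i => if i = n + 1 then 0 else Vpos (n + 1) q k (i + 1)) x
      = x * evalDesc n (fun i => Vpos (n + 1) q k (i + 1)) x := by
    rw [evalDesc_succ_top, if_pos rfl, add_zero]
    exact congrArg (x * ·) (evalDesc_congr fun i hi => if_neg (by have := mem_Icc.1 hi; omega))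
  change evalDesc (n + 1) (fun i => (if i = n + 1 then 0 else Vpos (n + 1) q k (i + 1)) -
    q i * Vpos (n + 1) q k 1) x = _
  rw [evalDesc_sub_mul, hshift, evalDesc_succ (f := Vpos (n + 1) q k)]
  ring

lemma evalDesc_Vneg_succ (n : ℕ) (q : ℕ → ℝ) (hq : q (n + 1) ≠ 0) (j : ℕ) (x : ℝ) :
    x * evalDesc (n + 1) (Vneg (n + 1) q (j + 1)) x =
      evalDesc (n + 1) (Vneg (n + 1) q j) x -
        Vneg (n + 1) q j (n + 1) / q (n + 1) * (x ^ (n + 1) + evalDesc (n + 1) q x) := by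
  change x * evalDesc (n + 1) (fun r => (if r = 1 then 0 else Vneg (n + 1) q j (r - 1)) -
    (if r = 1 then 1 else q (r - 1)) / q (n + 1) * Vneg (n + 1) q j (n + 1)) x = _
  rw [evalDesc_sub_mul, evalDesc_div_const, evalDesc_succ_ite_one, evalDesc_succ_ite_one,
    evalDesc_succ_top (f := Vneg (n + 1) q j), evalDesc_succ_top (f := q)]
  field_simp
  ring

lemma evalDesc_Vpos {n : ℕ} {q : ℕ → ℝ} {x : ℝ} (hroot : x ^ (n + 1) + evalDesc (n + 1) q x = 0)
    (k : ℕ) : evalDesc (n + 1) (Vpos (n + 1) q k) x = x ^ k := by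
  induction k with
  | zero => exact evalDesc_ite_eq_top n x
  | succ k ih => rw [evalDesc_Vpos_succ, ih, hroot, pow_succ]; ring

lemma evalDesc_Vneg {n : ℕ} {q : ℕ → ℝ} {x : ℝ} (hx : x ≠ 0) (hq : q (n + 1) ≠ 0)
    (hroot : x ^ (n + 1) + evalDesc (n + 1) q x = 0) (j : ℕ) :
    evalDesc (n + 1) (Vneg (n + 1) q j) x = (x ^ j)⁻¹ := by
  induction j with
  | zero => rw [pow_zero, inv_one]; exact evalDesc_ite_eq_top n x
  | succ j ih =>
    have h := evalDesc_Vneg_succ n q hq j x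
    rw [ih, hroot, mul_zero, sub_zero] at h
    rw [pow_succ, mul_inv, ← h]
    field_simp

lemma evalDesc_benenti {n : ℕ} {q : ℕ → ℝ} {x : ℝ} (hx : x ≠ 0) (hq : q (n + 1) ≠ 0)
    (hroot : x ^ (n + 1) + evalDesc (n + 1) q x = 0) (k : ℤ) :
    evalDesc (n + 1) (benenti (n + 1) q k) x = x ^ k := by
  by_cases hk : 0 ≤ k
  · have : benenti (n + 1) q k = Vpos (n + 1) q k.toNat := funext fun i => if_pos hk
    rw [this, evalDesc_Vpos hroot, ← zpow_natCast, Int.toNat_of_nonneg hk]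
  · have : benenti (n + 1) q k = Vneg (n + 1) q (-k).toNat := funext fun i => if_neg hk
    rw [this, evalDesc_Vneg hx hq hroot, ← zpow_natCast, Int.toNat_of_nonneg (by omega), ← zpow_neg,
      neg_neg]

theorem stackel_separation_relations_general (n : ℕ) (m k : ℤ) (ε : ℝ)
    (lam : Fin n → ℝ) (hinj : Function.Injective lam)
    (h0 : ∀ j, lam j ≠ 0) (mu : Fin n → ℝ) (r : Fin n) :
    (∑ i ∈ Finset.Icc 1 n, stackelH n m k ε i lam mu * lam r ^ (n - i)) =
      lam r ^ m * mu r ^ 2 + ε / 4 * lam r ^ k := by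
  obtain ⟨n, rfl⟩ := Nat.exists_eq_add_one_of_ne_zero r.pos.ne'
  have hroot : lam r ^ (n + 1) + evalDesc (n + 1) (fun i => viete i lam) (lam r) = 0 := by
    rw [← prod_sub_eq_evalDesc_viete]
    exact prod_eq_zero (mem_univ r) (sub_self _)
  have hkinetic := evalDesc_sum_neg_vieteD_mul lam (fun j => lam j ^ m / Delta lam j * mu j ^ 2) r
  have hpotential := evalDesc_benenti (h0 r) (viete_self_ne_zero h0) hroot k
  calc (∑ i ∈ Icc 1 (n + 1), stackelH (n + 1) m k ε i lam mu * lam r ^ (n + 1 - i))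
      = evalDesc (n + 1) (fun i => ∑ j, -vieteD i lam j * (lam j ^ m / Delta lam j * mu j ^ 2))
          (lam r) + ε / 4 * evalDesc (n + 1) (benenti (n + 1) (fun a => viete a lam) k) (lam r) := by
        rw [← evalDesc_add_mul]
        simp only [stackelH, mul_assoc]
        rfl
    _ = lam r ^ m * mu r ^ 2 + ε / 4 * lam r ^ k := by
        rw [hkinetic, hpotential, div_mul_eq_mul_div, div_mul_cancel₀ _ (Delta_ne_zero hinj r)]

theorem stackel_separation_relations (n : ℕ) (hn : 1 ≤ n) (m k : ℤ) (ε : ℝ)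
    (hε : ε = 1 ∨ ε = -1) (lam : Fin n → ℝ) (hinj : Function.Injective lam)
    (h0 : ∀ j, lam j ≠ 0) (mu : Fin n → ℝ) (r : Fin n) :
    (∑ i ∈ Finset.Icc 1 n, stackelH n m k ε i lam mu * lam r ^ (n - i)) =
      lam r ^ m * mu r ^ 2 + ε / 4 * lam r ^ k :=
  stackel_separation_relations_general n m k ε lam hinj h0 mu r
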